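/- Let h be a finite-dimensional simple real Lie algebra whose Killing form κ_h is negative definite (a compact simple Lie algebra), let g be a finite-dimensional real Lie algebra whose Killing form κ_g is negative definite, and let ι : h → g be an injective Lie algebra homomorphism. Then there exists a real constant c > 0 such that κ_g(ι(x), ι(y)) = c · κ_h(x, y) for all x, y ∈ h. (The constant c encodes the Dynkin index of the inclusion.) -/

import Mathlib

/-!
Let `B` be the pullback of `κ_g` along `ι`. Both `B` and `-κ_h` are symmetric invariant forms on
`h`, and `-κ_h` is positive definite, so `B = κ_h(T ·, ·)` for an operator `T` which is
self-adjoint for `-κ_h` and commutes with `ad`. Self-adjointness gives `T` a real eigenvalue `c`,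
and its eigenspace is a nonzero ideal, hence all of `h` by simplicity: `B = c • κ_h`.
Evaluating at some `x ≠ 0`, where both forms are negative, shows `c > 0`.
-/

open LinearMap (BilinForm)

theorem LieModuleHom.eq_smul_of_hasEigenvector {K L M : Type*} [CommRing K] [LieRing L]
    [LieAlgebra K L] [AddCommGroup M] [Module K M] [LieRingModule L M] [LieModule K L M]
    [LieModule.IsIrreducible K L M] (T : M →ₗ⁅K,L⁆ M) {μ : K} {v : M}
    (hv : Module.End.HasEigenvector (T : Module.End K M) μ v) (x : M) : T x = μ • x := by
  have hker : (T - μ • LieModuleHom.id).ker = ⊤ := by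
    refine (IsSimpleOrder.eq_bot_or_eq_top _).resolve_left fun hbot => hv.2 ?_
    have hvker : v ∈ (T - μ • LieModuleHom.id).ker := by
      simpa [LieModuleHom.mem_ker, sub_eq_zero] using hv.apply_eq_smul
    simpa [hbot] using hvker
  have hx : x ∈ (T - μ • LieModuleHom.id).ker := hker ▸ LieSubmodule.mem_top x
  simpa [LieModuleHom.mem_ker, sub_eq_zero] using hx

namespace LinearMap.BilinForm

theorem exists_hasEigenvector_of_isAdjointPair
    {V : Type*} [AddCommGroup V] [Module ℝ V] [FiniteDimensional ℝ V] [Nontrivial V]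
    {Φ : BilinForm ℝ V} (hΦs : Φ.IsSymm) (hΦ : ∀ x, x ≠ 0 → 0 < Φ x x)
    {T : Module.End ℝ V} (hT : IsAdjointPair Φ Φ T T) :
    ∃ μ v, T.HasEigenvector μ v := by
  -- `Φ` makes `V` a Euclidean space in which `T` is self-adjoint, so the maximum of its
  -- Rayleigh quotient is an eigenvalue.
  let core : InnerProductSpace.Core ℝ V :=
    { inner := fun x y => Φ x y
      conj_inner_symm := fun x y => hΦs.eq y x
      re_inner_nonneg := fun x => by
        rcases eq_or_ne x 0 with rfl | hx
        · simp
        · exact (hΦ x hx).le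
      definite := fun x hx => by
        by_contra hx0
        exact (hΦ x hx0).ne' hx
      add_left := fun x y z => by simp
      smul_left := fun x y r => by simp }
  let _ : NormedAddCommGroup V := core.toNormedAddCommGroup
  let _ : InnerProductSpace ℝ V := .ofCore core.toCore
  have hTsymm : T.IsSymmetric := hT
  exact ⟨_, _, hTsymm.hasEigenvalue_iSup_of_finiteDimensional.exists_hasEigenvector.choose_spec⟩

theorem lieInvariant.neg {R L M : Type*} [CommRing R] [LieRing L]
    [AddCommGroup M] [Module R M] [LieRingModule L M] {Φ : BilinForm R M}
    (hΦ : Φ.lieInvariant L) : (-Φ).lieInvariant L := fun x y z => by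
  simp [hΦ x y z]

theorem lieInvariant.compl₁₂ {R K L : Type*} [CommRing R] [LieRing K] [LieAlgebra R K]
    [LieRing L] [LieAlgebra R L] {Φ : BilinForm R L} (hΦ : Φ.lieInvariant L)
    (f : K →ₗ⁅R⁆ L) : lieInvariant K (Φ.compl₁₂ (f : K →ₗ[R] L) (f : K →ₗ[R] L)) :=
  fun x y z => by simpa using hΦ (f x) (f y) (f z)

theorem symmCompOfNondegenerate_lie {K L M : Type*} [Field K] [LieRing L]
    [AddCommGroup M] [Module K M] [LieRingModule L M] [FiniteDimensional K M]
    {Φ B : BilinForm K M} (hΦ : Φ.Nondegenerate) (hΦi : Φ.lieInvariant L)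
    (hBi : B.lieInvariant L) (x : L) (m : M) :
    B.symmCompOfNondegenerate Φ hΦ ⁅x, m⁆ = ⁅x, B.symmCompOfNondegenerate Φ hΦ m⁆ := by
  refine (Φ.toDual hΦ).injective (LinearMap.ext fun n => ?_)
  simp only [toDual_def, symmCompOfNondegenerate_left_apply, hBi x m n, hΦi x _ n]

theorem exists_eq_smul_of_lieInvariant {L M : Type*} [LieRing L]
    [LieAlgebra ℝ L] [AddCommGroup M] [Module ℝ M] [LieRingModule L M] [LieModule ℝ L M]
    [FiniteDimensional ℝ M] [LieModule.IsIrreducible ℝ L M]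
    {Φ B : BilinForm ℝ M} (hΦs : Φ.IsSymm) (hΦ : ∀ x, x ≠ 0 → 0 < Φ x x)
    (hΦi : Φ.lieInvariant L) (hBs : B.IsSymm) (hBi : B.lieInvariant L) :
    ∃ c : ℝ, B = c • Φ := by
  have := LieModule.nontrivial_of_isIrreducible ℝ L M
  have hΦn : Φ.Nondegenerate := by
    refine ⟨fun x hx => ?_, fun x hx => ?_⟩ <;> by_contra hx0 <;> exact (hΦ x hx0).ne' (hx x)
  let T : M →ₗ⁅ℝ,L⁆ M :=
    { B.symmCompOfNondegenerate Φ hΦn with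
      map_lie' := symmCompOfNondegenerate_lie hΦn hΦi hBi _ _ }
  have hT : ∀ x y, Φ (T x) y = B x y := fun x y => symmCompOfNondegenerate_left_apply B hΦn y x
  have hTadj : IsAdjointPair Φ Φ (T : Module.End ℝ M) T := fun x y => by
    rw [LieModuleHom.coe_toLinearMap, hT, hBs.eq, ← hT, hΦs.eq]
  obtain ⟨μ, v, hv⟩ := exists_hasEigenvector_of_isAdjointPair hΦs hΦ hTadj
  refine ⟨μ, LinearMap.ext₂ fun x y => ?_⟩
  rw [← hT, T.eq_smul_of_hasEigenvector hv x]
  simp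

end LinearMap.BilinForm

theorem killingForm_pullback_proportional_general
    (h : Type*) [LieRing h] [LieAlgebra ℝ h] [FiniteDimensional ℝ h]
    (g : Type*) [LieRing g] [LieAlgebra ℝ g]
    [LieAlgebra.IsSimple ℝ h]
    (hκh : ∀ x : h, x ≠ 0 → killingForm ℝ h x x < 0)
    (hκg : ∀ x : g, x ≠ 0 → killingForm ℝ g x x < 0)
    (ι : h →ₗ⁅ℝ⁆ g) (hι : Function.Injective ι) :
    ∃ c : ℝ, 0 < c ∧ ∀ x y : h,
      killingForm ℝ g (ι x) (ι y) = c * killingForm ℝ h x y := by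
  have hκs : (killingForm ℝ h).IsSymm := ⟨LieModule.traceForm_comm ℝ h h⟩
  let B : BilinForm ℝ h := (killingForm ℝ g).compl₁₂ (ι : h →ₗ[ℝ] g) (ι : h →ₗ[ℝ] g)
  have hBs : B.IsSymm := ⟨fun x y => LieModule.traceForm_comm ℝ g g (ι x) (ι y)⟩
  have hBi : B.lieInvariant h := (LieModule.traceForm_lieInvariant ℝ g g).compl₁₂ ι
  obtain ⟨c, hc⟩ := LinearMap.BilinForm.exists_eq_smul_of_lieInvariant (L := h)
    (Φ := -killingForm ℝ h) (B := -B) hκs.neg (fun x hx => by simpa using hκh x hx)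
    (LieModule.traceForm_lieInvariant ℝ h h).neg hBs.neg hBi.neg
  have hpullback : ∀ x y : h, killingForm ℝ g (ι x) (ι y) = c * killingForm ℝ h x y := by
    intro x y
    simpa [B] using congr($hc x y)
  refine ⟨c, ?_, hpullback⟩
  have := LieAlgebra.IsSimple.nontrivial ℝ (L := h)
  obtain ⟨x, hx⟩ := exists_ne (0 : h)
  have hιx : killingForm ℝ g (ι x) (ι x) < 0 := hκg _ ((map_ne_zero_iff ι hι).mpr hx)
  rw [hpullback] at hιx
  exact pos_of_mul_neg_left hιx (hκh x hx).le

/-- For an injective homomorphism `ι : h → g` of a compact simple Lie algebra `h` into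
a Lie algebra `g` with negative definite Killing form, the pullback of the Killing form
of `g` is a positive multiple of the Killing form of `h` (Dynkin index). -/
theorem killingForm_pullback_proportional
    (h : Type*) [LieRing h] [LieAlgebra ℝ h] [FiniteDimensional ℝ h]
    (g : Type*) [LieRing g] [LieAlgebra ℝ g] [FiniteDimensional ℝ g]
    [LieAlgebra.IsSimple ℝ h]
    (hκh : ∀ x : h, x ≠ 0 → killingForm ℝ h x x < 0)
    (hκg : ∀ x : g, x ≠ 0 → killingForm ℝ g x x < 0)
    (ι : h →ₗ⁅ℝ⁆ g) (hι : Function.Injective ι) :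
    ∃ c : ℝ, 0 < c ∧ ∀ x y : h,
      killingForm ℝ g (ι x) (ι y) = c * killingForm ℝ h x y :=
  killingForm_pullback_proportional_general h g hκh hκg ι hι
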